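/- arXiv:2605.28299 — 7 statements merged into one kernel-verified Lean document; each statement's English description precedes it below -/
import Mathlib

section
/- Let G be a profinite group and let φ̃ : G̃ → G be a universal Frattini cover of G. Then a finite group B is a continuous quotient of G̃ if and only if B/Φ(B) is a continuous quotient of G, where Φ(B) denotes the Frattini subgroup of B. -/
open Function

noncomputable section

/-- The Frattini subgroup of a topological group: the intersection of all maximal open
subgroups. -/
def frattiniOpen (G : Type*) [Group G] [TopologicalSpace G] : Subgroup G :=
  ⨅ M ∈ {M : Subgroup G | IsOpen (M : Set G) ∧ IsCoatom M}, M

/-- A Frattini cover: a continuous epimorphism whose kernel is contained in the Frattini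
subgroup of the source. -/
def IsFrattiniCover {H G : Type*} [Group H] [TopologicalSpace H] [Group G] [TopologicalSpace G]
    (φ : H →* G) : Prop :=
  Continuous φ ∧ Surjective φ ∧ φ.ker ≤ frattiniOpen H

/-- A universal Frattini cover: a Frattini cover through which every Frattini cover by a
profinite group factors via a continuous epimorphism. -/
def IsUniversalFrattiniCover {tG G : Type*} [Group tG] [TopologicalSpace tG] [Group G]
    [TopologicalSpace G] (φt : tG →* G) : Prop :=
  IsFrattiniCover φt ∧
    ∀ (H : Type) [Group H] [TopologicalSpace H] [IsTopologicalGroup H] [CompactSpace H]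
      [T2Space H] [TotallyDisconnectedSpace H] (β : H →* G), IsFrattiniCover β →
        ∃ γ : tG →* H, Continuous γ ∧ Surjective γ ∧ β.comp γ = φt

/-- A topological group is pro-`ℓ` if each of its continuous finite quotients is an
`ℓ`-group. -/
def IsProL (ℓ : ℕ) (H : Type*) [Group H] [TopologicalSpace H] : Prop :=
  ∀ (Q : Type) [Group Q] [Finite Q] (φ : H →* Q),
    Surjective φ → IsOpen (φ.ker : Set H) → IsPGroup ℓ Q

end

/-!
A continuous epimorphism `θ : G̃ → B` onto a finite group carries the Frattini subgroup of `G̃`,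
and hence `ker φ̃`, into `Φ(B)`; so `G̃ → B/Φ(B)` factors through `G`.

Conversely, given `ψ : G → B/Φ(B)`, the fibre product `P = B ×_{B/Φ(B)} G` maps onto `G`.
By Zorn's lemma (chains are handled by Cantor's intersection theorem in the compact group `P`)
there is a minimal closed subgroup `C ≤ P` still mapping onto `G`, and minimality makes
`C → G` a Frattini cover: a maximal open subgroup of `C` missing the kernel would itself map
onto `G`. Hence `G̃` maps onto `C`, and the image of `C` in `B` supplements `Φ(B)`, so it is
all of `B`.
-/

open Topology

section Frattini

variable {H K : Type*} [Group H] [TopologicalSpace H] [Group K] [TopologicalSpace K]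

lemma frattiniOpen_le_comap {f : H →* K} (hc : Continuous f) (hs : Surjective f) :
    frattiniOpen H ≤ (frattiniOpen K).comap f := by
  simp only [frattiniOpen, Subgroup.comap_iInf]
  exact le_iInf₂ fun M hM =>
    biInf_le _ ⟨hM.1.preimage hc, Subgroup.isCoatom_comap_of_surjective hs hM.2⟩

lemma frattiniOpen_eq_frattini [DiscreteTopology K] : frattiniOpen K = frattini K := by
  simp [frattiniOpen, frattini, Order.radical, isOpen_discrete]

end Frattini

lemma MonoidHom.surjective_of_surjective_mk_frattini_comp {H K : Type*} [Group H] [Group K]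
    [Finite K] (θ : H →* K) (h : Surjective ((QuotientGroup.mk' (frattini K)).comp θ)) :
    Surjective θ := by
  have hcodisj : Codisjoint θ.range (QuotientGroup.mk' (frattini K)).ker := by
    rw [← Subgroup.map_eq_range_iff, ← MonoidHom.range_comp,
      MonoidHom.range_eq_top_of_surjective _ h,
      MonoidHom.range_eq_top_of_surjective _ (QuotientGroup.mk'_surjective _)]
  rw [QuotientGroup.ker_mk', codisjoint_iff] at hcodisj
  exact θ.range_eq_top.mp (frattini_nongenerating hcodisj)

section Cover

variable {H G : Type*} [Group H] [TopologicalSpace H] [Group G] [TopologicalSpace G]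

lemma Topology.IsQuotientMap.exists_continuous_comp_eq_of_ker_le {Q : Type*} [Group Q]
    [TopologicalSpace Q] {φ : H →* G} (hq : IsQuotientMap φ) {χ : H →* Q} (hχ : Continuous χ)
    (hker : φ.ker ≤ χ.ker) : ∃ ψ : G →* Q, Continuous ψ ∧ ψ.comp φ = χ := by
  have hcomp := φ.liftOfRightInverse_comp _ (rightInverse_surjInv hq.surjective) ⟨χ, hker⟩
  refine ⟨_, ?_, hcomp⟩
  rw [hq.continuous_iff, ← MonoidHom.coe_comp, hcomp]
  exact hχ

lemma IsFrattiniCover.exists_continuous_surjective_to_quotient_frattini [CompactSpace H]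
    [T2Space G] {φ : H →* G} (hφ : IsFrattiniCover φ) {B : Type*} [Group B] [TopologicalSpace B]
    [DiscreteTopology B] {θ : H →* B} (hc : Continuous θ) (hs : Surjective θ) :
    ∃ ψ : G →* B ⧸ frattini B, Continuous ψ ∧ Surjective ψ := by
  obtain ⟨hφc, hφs, hφker⟩ := hφ
  have hker : φ.ker ≤ ((QuotientGroup.mk' (frattini B)).comp θ).ker := by
    rw [← MonoidHom.comap_ker, QuotientGroup.ker_mk', ← frattiniOpen_eq_frattini]
    exact hφker.trans (frattiniOpen_le_comap hc hs)
  have hq : IsQuotientMap φ := .of_surjective_continuous hφs hφc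
  obtain ⟨ψ, hψc, hψ⟩ :=
    hq.exists_continuous_comp_eq_of_ker_le (continuous_quotient_mk'.comp hc) hker
  refine ⟨ψ, hψc, Surjective.of_comp (g := φ) ?_⟩
  rw [← MonoidHom.coe_comp, hψ]
  exact (QuotientGroup.mk'_surjective _).comp hs

end Cover

section MinimalSubgroup

variable {H G : Type*} [Group H] [TopologicalSpace H] [Group G] [TopologicalSpace G]

lemma Subgroup.map_sInf_eq_top_of_isChain [CompactSpace H] [T1Space G] {β : H →* G}
    (hβ : Continuous β) {c : Set (Subgroup H)} (hchain : IsChain (· ≤ ·) c) (hne : c.Nonempty)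
    (hclosed : ∀ D ∈ c, IsClosed (D : Set H)) (hmap : ∀ D ∈ c, D.map β = ⊤) :
    (sInf c).map β = ⊤ := by
  refine eq_top_iff.mpr fun g _ => ?_
  have : Nonempty c := hne.to_subtype
  have hfibre (D : c) : IsClosed ((D : Set H) ∩ β ⁻¹' {g}) :=
    (hclosed D D.2).inter (isClosed_singleton.preimage hβ)
  have hdir : Directed (· ⊇ ·) fun D : c => (D : Set H) ∩ β ⁻¹' {g} := by
    rintro ⟨D₁, h₁⟩ ⟨D₂, h₂⟩
    rcases hchain.total h₁ h₂ with h | h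
    · exact ⟨⟨D₁, h₁⟩, subset_rfl, Set.inter_subset_inter_left _ h⟩
    · exact ⟨⟨D₂, h₂⟩, Set.inter_subset_inter_left _ h, subset_rfl⟩
  have hfibre_ne (D : c) : ((D : Set H) ∩ β ⁻¹' {g}).Nonempty := by
    obtain ⟨p, hp, hpg⟩ := (hmap D D.2).ge (Subgroup.mem_top g)
    exact ⟨p, hp, hpg⟩
  obtain ⟨p, hp⟩ := IsCompact.nonempty_iInter_of_directed_nonempty_isCompact_isClosed _ hdir
    hfibre_ne (fun D => (hfibre D).isCompact) hfibre
  simp only [Set.mem_iInter, Set.mem_inter_iff, SetLike.mem_coe, Set.mem_preimage,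
    Set.mem_singleton_iff] at hp
  exact ⟨p, Subgroup.mem_sInf.mpr fun D hD => (hp ⟨D, hD⟩).1, (hp ⟨_, hne.some_mem⟩).2⟩

lemma exists_minimal_isClosed_map_eq_top [CompactSpace H] [T1Space G] {β : H →* G}
    (hβ : Continuous β) (hs : Surjective β) :
    ∃ C : Subgroup H, Minimal (fun D : Subgroup H => IsClosed (D : Set H) ∧ D.map β = ⊤) C := by
  set S : Set (Subgroup H)ᵒᵈ := {D | IsClosed (D.ofDual : Set H) ∧ D.ofDual.map β = ⊤}
  have hbound : ∀ c ⊆ S, IsChain (· ≤ ·) c → ∀ D ∈ c, ∃ lb ∈ S, ∀ E ∈ c, E ≤ lb := by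
    intro c hc hchain D hD
    refine ⟨OrderDual.toDual (sInf (OrderDual.toDual ⁻¹' c)), ⟨?_, ?_⟩,
      fun E hE => OrderDual.le_toDual.mpr (sInf_le hE)⟩
    · rw [OrderDual.ofDual_toDual, Subgroup.coe_sInf]
      exact isClosed_biInter fun E hE => (hc hE).1
    · exact Subgroup.map_sInf_eq_top_of_isChain hβ hchain.symm ⟨D, hD⟩ (fun E hE => (hc hE).1)
        fun E hE => (hc hE).2
  obtain ⟨C, -, hC⟩ := zorn_le_nonempty₀ S hbound (OrderDual.toDual ⊤)
    ⟨isClosed_univ, Subgroup.map_top_of_surjective β hs⟩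
  exact ⟨C.ofDual, minimal_toDual.mp hC⟩

lemma isFrattiniCover_comp_subtype_of_minimal [IsTopologicalGroup H] {β : H →* G}
    (hβ : Continuous β) {C : Subgroup H}
    (hC : Minimal (fun D : Subgroup H => IsClosed (D : Set H) ∧ D.map β = ⊤) C) :
    IsFrattiniCover (β.comp C.subtype) := by
  obtain ⟨⟨hCclosed, hCmap⟩, hCmin⟩ := hC
  have hsurj : Surjective (β.comp C.subtype) := by
    rw [← MonoidHom.range_eq_top, MonoidHom.range_comp, C.range_subtype, hCmap]
  refine ⟨hβ.comp continuous_subtype_val, hsurj, le_iInf₂ fun M ⟨hMopen, hMcoatom⟩ => ?_⟩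
  by_contra hle
  have hsup : M ⊔ (β.comp C.subtype).ker = ⊤ := hMcoatom.2 _ (left_lt_sup.mpr hle)
  have hMmap : (M.map C.subtype).map β = ⊤ := by
    rw [Subgroup.map_map, Subgroup.map_eq_range_iff.mpr (codisjoint_iff.mpr hsup),
      MonoidHom.range_eq_top.mpr hsurj]
  have hMclosed : IsClosed (M.map C.subtype : Set H) := by
    rw [Subgroup.coe_map]
    exact hCclosed.isClosedEmbedding_subtypeVal.isClosedMap _ (M.isClosed_of_isOpen hMopen)
  have hCM : C.subtype.range ≤ M.map C.subtype := by
    rw [C.range_subtype]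
    exact hCmin ⟨hMclosed, hMmap⟩ (Subgroup.map_subtype_le M)
  rw [MonoidHom.range_eq_map, Subgroup.map_subtype_le_map_subtype] at hCM
  exact hMcoatom.1 (top_le_iff.mp hCM)

lemma exists_isClosed_isFrattiniCover_comp_subtype [IsTopologicalGroup H] [CompactSpace H]
    [T1Space G] {β : H →* G} (hβ : Continuous β) (hs : Surjective β) :
    ∃ C : Subgroup H, IsClosed (C : Set H) ∧ IsFrattiniCover (β.comp C.subtype) :=
  let ⟨C, hC⟩ := exists_minimal_isClosed_map_eq_top hβ hs
  ⟨C, hC.1.1, isFrattiniCover_comp_subtype_of_minimal hβ hC⟩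

end MinimalSubgroup

lemma IsUniversalFrattiniCover.exists_continuous_surjective_of_quotient_frattini
    {tG G : Type} [Group tG] [TopologicalSpace tG] [Group G] [TopologicalSpace G]
    [IsTopologicalGroup G] [CompactSpace G] [T2Space G] [TotallyDisconnectedSpace G]
    {φt : tG →* G} (huniv : IsUniversalFrattiniCover φt)
    {B : Type} [Group B] [Finite B] [TopologicalSpace B] [DiscreteTopology B]
    {ψ : G →* B ⧸ frattini B} (hψc : Continuous ψ) (hψs : Surjective ψ) :
    ∃ θ : tG →* B, Continuous θ ∧ Surjective θ := by
  have : DiscreteTopology (B ⧸ frattini B) := QuotientGroup.discreteTopology (isOpen_discrete _)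
  set π := QuotientGroup.mk' (frattini B)
  set P : Subgroup (B × G) := (π.comp (MonoidHom.fst B G)).eqLocus (ψ.comp (MonoidHom.snd B G))
  have hPclosed : IsClosed (P : Set (B × G)) :=
    isClosed_eq (continuous_quotient_mk'.comp continuous_fst) (hψc.comp continuous_snd)
  have : CompactSpace P := isCompact_iff_compactSpace.mp hPclosed.isCompact
  set β := (MonoidHom.snd B G).comp P.subtype
  have hβs : Surjective β := fun g => by
    obtain ⟨b, hb⟩ := QuotientGroup.mk'_surjective (frattini B) (ψ g)
    exact ⟨⟨(b, g), hb⟩, rfl⟩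
  obtain ⟨C, hCclosed, hC⟩ :=
    exists_isClosed_isFrattiniCover_comp_subtype (continuous_snd.comp continuous_subtype_val) hβs
  have : CompactSpace C := isCompact_iff_compactSpace.mp hCclosed.isCompact
  obtain ⟨γ, hγc, -, hγ⟩ := huniv.2 C _ hC
  set θ := (MonoidHom.fst B G).comp (P.subtype.comp (C.subtype.comp γ))
  have hπθ : π.comp θ = ψ.comp φt := by
    rw [← hγ]
    ext x
    exact (γ x : P).2
  refine ⟨θ, continuous_fst.comp (continuous_subtype_val.comp (continuous_subtype_val.comp hγc)),
    θ.surjective_of_surjective_mk_frattini_comp ?_⟩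
  rw [hπθ, MonoidHom.coe_comp]
  exact hψs.comp huniv.1.2.1

theorem statement_0_general (G tG : Type) [Group G] [TopologicalSpace G] [IsTopologicalGroup G]
    [CompactSpace G] [T2Space G] [TotallyDisconnectedSpace G]
    [Group tG] [TopologicalSpace tG]
    [CompactSpace tG]
    (φt : tG →* G) (huniv : IsUniversalFrattiniCover φt)
    (B : Type) [Group B] [Finite B] [TopologicalSpace B] [DiscreteTopology B] :
    (∃ ψ : tG →* B, Continuous ψ ∧ Function.Surjective ψ) ↔
      ∃ ψ : G →* B ⧸ frattini B, Continuous ψ ∧ Function.Surjective ψ := by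
  constructor
  · rintro ⟨θ, hθc, hθs⟩
    exact huniv.1.exists_continuous_surjective_to_quotient_frattini hθc hθs
  · rintro ⟨ψ, hψc, hψs⟩
    exact huniv.exists_continuous_surjective_of_quotient_frattini hψc hψs

/-- Let `G` be a profinite group and `φt : G̃ → G` a universal Frattini
cover of `G`.  Then a finite group `B` is a continuous quotient of `G̃` if and only if
`B/Φ(B)` is a continuous quotient of `G`, where `Φ(B)` denotes the Frattini subgroup
of `B`. -/
theorem statement_0 (G tG : Type) [Group G] [TopologicalSpace G] [IsTopologicalGroup G]
    [CompactSpace G] [T2Space G] [TotallyDisconnectedSpace G]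
    [Group tG] [TopologicalSpace tG] [IsTopologicalGroup tG]
    [CompactSpace tG] [T2Space tG] [TotallyDisconnectedSpace tG]
    (φt : tG →* G) (huniv : IsUniversalFrattiniCover φt)
    (B : Type) [Group B] [Finite B] [TopologicalSpace B] [DiscreteTopology B] :
    (∃ ψ : tG →* B, Continuous ψ ∧ Function.Surjective ψ) ↔
      ∃ ψ : G →* B ⧸ frattini B, Continuous ψ ∧ Function.Surjective ψ :=
  statement_0_general G tG φt huniv B
end

section
/- Let G be a profinite group and N a closed normal subgroup of G. If for every open normal subgroup M of G the canonical quotient map G/M → G/NM is a Frattini cover, then the quotient map G → G/N is a Frattini cover; equivalently, N ⊆ Φ(G). -/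
/-!
Let `K` be a maximal open subgroup of `G`. In a compact group `K` has finite index, so its
normal core `M` is an open normal subgroup contained in `K`, and `K / M` is a maximal open
subgroup of `G / M`. The kernel of `G/M → G/NM` is `NM / M`, which by hypothesis lies in
`Φ(G/M) ≤ K / M`; pulling back to `G` gives `N ≤ NM ≤ K`.
-/

open Function

namespace Subgroup

variable {G H : Type*} [Group G] [Group H]

theorem isCoatom_map_of_surjective {f : G →* H} (hf : Surjective f) {K : Subgroup G}
    (hker : f.ker ≤ K) (hK : IsCoatom K) : IsCoatom (K.map f) := by
  have hcomap : (K.map f).comap f = K := comap_map_eq_self hker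
  refine ⟨fun htop => hK.1 ?_, fun L hL => ?_⟩
  · rw [← hcomap, htop, comap_top]
  · have hlt : K < L.comap f := by
      rwa [← hcomap, comap_lt_comap_of_surjective hf]
    rw [← map_comap_eq_self_of_surjective hf L, hK.2 _ hlt, map_top_of_surjective f hf]

theorem isOpen_normalCore [TopologicalSpace G] [IsTopologicalGroup G] [CompactSpace G]
    {K : Subgroup G} (hK : IsOpen (K : Set G)) : IsOpen (K.normalCore : Set G) :=
  have : Finite (G ⧸ K) := K.quotient_finite_of_isOpen hK
  have : K.FiniteIndex := K.finiteIndex_of_finite_quotient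
  isOpen_of_isClosed_of_finiteIndex _ (K.normalCore_isClosed (K.isClosed_of_isOpen hK))

end Subgroup

theorem comap_mk'_frattiniOpen_le {G : Type*} [Group G] [TopologicalSpace G]
    [IsTopologicalGroup G] {M K : Subgroup G} [M.Normal] (hMK : M ≤ K)
    (hK : IsOpen (K : Set G)) (hKmax : IsCoatom K) :
    (frattiniOpen (G ⧸ M)).comap (QuotientGroup.mk' M) ≤ K := by
  have hopen : IsOpen (K.map (QuotientGroup.mk' M) : Set (G ⧸ M)) :=
    QuotientGroup.isOpenMap_coe _ hK
  have hmax : IsCoatom (K.map (QuotientGroup.mk' M)) :=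
    Subgroup.isCoatom_map_of_surjective (QuotientGroup.mk'_surjective M)
      (by rwa [QuotientGroup.ker_mk']) hKmax
  have hle : frattiniOpen (G ⧸ M) ≤ K.map (QuotientGroup.mk' M) :=
    iInf₂_le _ ⟨hopen, hmax⟩
  calc (frattiniOpen (G ⧸ M)).comap (QuotientGroup.mk' M)
      ≤ (K.map (QuotientGroup.mk' M)).comap (QuotientGroup.mk' M) := Subgroup.comap_mono hle
    _ = K := by rw [QuotientGroup.comap_map_mk', sup_eq_right.mpr hMK]

/-- Let `G` be a profinite group and `N` a closed normal subgroup of `G`.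
If for every open normal subgroup `M` of `G` the canonical quotient map
`G/M → G/NM` is a Frattini cover, then the quotient map `G → G/N` is a Frattini cover;
equivalently, `N ⊆ Φ(G)`. -/
theorem statement_1 (G : Type) [Group G] [TopologicalSpace G] [IsTopologicalGroup G]
    [CompactSpace G]
    (N : Subgroup G) [hNn : N.Normal]
    (h : ∀ (M : Subgroup G) [M.Normal], IsOpen (M : Set G) →
      letI : (N ⊔ M).Normal := Subgroup.sup_normal N M
      IsFrattiniCover (QuotientGroup.map M (N ⊔ M) (MonoidHom.id G)
        (by rw [Subgroup.comap_id]; exact le_sup_right))) :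
    IsFrattiniCover (QuotientGroup.mk' N) ∧ N ≤ frattiniOpen G := by
  have hN : N ≤ frattiniOpen G := by
    refine le_iInf₂ fun K ⟨hKopen, hKmax⟩ => ?_
    set M := K.normalCore
    have : (N ⊔ M).Normal := Subgroup.sup_normal N M
    obtain ⟨-, -, hker⟩ := h M (Subgroup.isOpen_normalCore hKopen)
    calc N ≤ M ⊔ (N ⊔ M) := le_sup_left.trans le_sup_right
      _ = ((N ⊔ M).map (QuotientGroup.mk' M)).comap (QuotientGroup.mk' M) :=
        (QuotientGroup.comap_map_mk' M _).symm
      _ ≤ (frattiniOpen (G ⧸ M)).comap (QuotientGroup.mk' M) := by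
        refine Subgroup.comap_mono (le_trans ?_ hker)
        rw [QuotientGroup.ker_map, Subgroup.comap_id]
      _ ≤ K := comap_mk'_frattiniOpen_le K.normalCore_le hKopen hKmax
  refine ⟨⟨continuous_quotient_mk', QuotientGroup.mk'_surjective N, ?_⟩, hN⟩
  rwa [QuotientGroup.ker_mk']
end

section
/- Let V and I be disjoint finite sets. If π : D_p^V × C_2^I → D_p is a surjective group homomorphism with kernel N, then there exists v ∈ V such that N = ker(π_v), where π_v is the projection onto the v coordinate. -/
/-!
In `D_p` (`p` odd) the only element commuting with two non-commuting elements is `1`.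
The images of the coordinate factors under `π` commute pairwise and generate `D_p`, which is
not abelian, so the images of two elements of a single factor `v` fail to commute; hence every
other factor of `D_p^V`, and the central image of the abelian factor `C_2^I`, is killed by `π`.
So `π` factors through the projection `π_v` via an endomorphism of `D_p` that is surjective,
hence injective.
-/

namespace DihedralGroup

variable {n : ℕ}

theorem commute_r_r (i j : ZMod n) : Commute (r i) (r j) := by
  rw [commute_iff_eq, r_mul_r, r_mul_r, add_comm]

theorem commute_r_sr_iff (hn : Odd n) {i j : ZMod n} : Commute (r i) (sr j) ↔ i = 0 := by
  rw [commute_iff_eq, r_mul_sr, sr_mul_r, sr.injEq, sub_eq_add_neg, add_right_inj,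
    neg_eq_iff_add_eq_zero, ZMod.add_self_eq_zero_iff_eq_zero hn]

theorem commute_sr_r_iff (hn : Odd n) {i j : ZMod n} : Commute (sr i) (r j) ↔ j = 0 := by
  rw [Commute.symm_iff, commute_r_sr_iff hn]

theorem commute_sr_sr_iff (hn : Odd n) {i j : ZMod n} : Commute (sr i) (sr j) ↔ i = j := by
  rw [commute_iff_eq, sr_mul_sr, sr_mul_sr, r.injEq, ← neg_sub, neg_eq_iff_add_eq_zero,
    ZMod.add_self_eq_zero_iff_eq_zero hn, sub_eq_zero]

theorem eq_one_of_commute_of_not_commute (hn : Odd n) {a b g : DihedralGroup n}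
    (hab : ¬Commute a b) (ha : Commute g a) (hb : Commute g b) : g = 1 := by
  rcases a with i | i <;> rcases b with j | j <;> rcases g with k | k <;>
    simp_all [commute_r_r, commute_r_sr_iff hn, commute_sr_r_iff hn, commute_sr_sr_iff hn]

end DihedralGroup

namespace MonoidHom

variable {K : Type*} [Group K]

section Pi

variable {ι : Type*} [Finite ι] [DecidableEq ι] {G : ι → Type*} [∀ i, Group (G i)]

theorem commute_of_forall_commute_map_mulSingle (φ : (∀ i, G i) →* K) {c : K}
    (hc : ∀ i x, Commute c (φ (Pi.mulSingle i x))) (f : ∀ i, G i) : Commute c (φ f) := by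
  have hconj : (MulAut.conj c).toMonoidHom.comp φ = φ :=
    pi_ext fun i x => by simp [(hc i x).eq]
  have := DFunLike.congr_fun hconj f
  simpa [commute_iff_eq, mul_inv_eq_iff_eq_mul] using this

theorem exists_not_commute_map_mulSingle (φ : (∀ i, G i) →* K) (hφ : Function.Surjective φ)
    (hK : ¬IsMulCommutative K) :
    ∃ i x y, ¬Commute (φ (Pi.mulSingle i x)) (φ (Pi.mulSingle i y)) := by
  by_contra! h
  refine hK (isMulCommutative_iff.2 fun a b => ?_)
  obtain ⟨f, rfl⟩ := hφ a
  obtain ⟨g, rfl⟩ := hφ b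
  refine (φ.commute_of_forall_commute_map_mulSingle (fun j y => ?_) f).symm
  refine (φ.commute_of_forall_commute_map_mulSingle (fun i x => ?_) g).symm
  rcases eq_or_ne j i with rfl | hji
  · exact h j y x
  · exact (Pi.mulSingle_commute hji y x).map φ

theorem exists_eq_comp_evalMonoidHom (φ : (∀ i, G i) →* K) (hφ : Function.Surjective φ)
    (hK : ¬IsMulCommutative K)
    (hcentralizer : ∀ a b g : K, ¬Commute a b → Commute g a → Commute g b → g = 1) :
    ∃ v, φ = (φ.comp (MonoidHom.mulSingle G v)).comp (Pi.evalMonoidHom G v) := by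
  obtain ⟨v, x, y, hxy⟩ := φ.exists_not_commute_map_mulSingle hφ hK
  refine ⟨v, pi_ext fun i z => ?_⟩
  rcases eq_or_ne i v with rfl | hiv
  · simp
  · have hcomm : ∀ w, Commute (φ (Pi.mulSingle i z)) (φ (Pi.mulSingle v w)) := fun w =>
      (Pi.mulSingle_commute hiv z w).map φ
    simp [hcentralizer _ _ _ hxy (hcomm x) (hcomm y), Pi.mulSingle_eq_of_ne' hiv]

end Pi

theorem eq_comp_fst_of_surjective {M N : Type*} [Group M] [CommGroup N]
    (π : M × N →* K) (hπ : Function.Surjective π) (hK : Subgroup.center K = ⊥) :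
    π = (π.comp (MonoidHom.inl M N)).comp (MonoidHom.fst M N) := by
  have hN : ∀ u : N, π (1, u) = 1 := fun u => by
    rw [← Subgroup.mem_bot, ← hK, Subgroup.mem_center_iff]
    intro a
    obtain ⟨x, rfl⟩ := hπ a
    exact (Prod.commute_iff.2 ⟨Commute.one_right _, Commute.all _ _⟩ |>.map π).eq
  ext ⟨m, u⟩
  calc π (m, u) = π ((m, 1) * (1, u)) := by simp
    _ = π (m, 1) := by rw [map_mul, hN, mul_one]

end MonoidHom

theorem statement_2_general (p : ℕ) (hp : p.Prime) (hodd : Odd p)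
    (V I : Type) [Finite V]
    (π : ((V → DihedralGroup p) × (I → ℤˣ)) →* DihedralGroup p)
    (hsurj : Function.Surjective π) :
    ∃ v : V, π.ker =
      ((Pi.evalMonoidHom (fun _ : V => DihedralGroup p) v).comp
        (MonoidHom.fst (V → DihedralGroup p) (I → ℤˣ))).ker := by
  classical
  have : NeZero p := ⟨hp.ne_zero⟩
  set φ := π.comp (MonoidHom.inl _ _)
  have hπ : π = φ.comp (MonoidHom.fst _ _) := π.eq_comp_fst_of_surjective hsurj
    (DihedralGroup.center_eq_bot_of_odd_ne_one hodd hp.one_lt.ne')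
  have hφ : Function.Surjective φ := by
    rw [hπ, MonoidHom.coe_comp] at hsurj
    exact hsurj.of_comp
  obtain ⟨v, hv⟩ := φ.exists_eq_comp_evalMonoidHom hφ
    (DihedralGroup.not_commutative hp.one_lt.ne' (hodd.ne_two_of_dvd_nat dvd_rfl))
    (fun _ _ _ => DihedralGroup.eq_one_of_commute_of_not_commute hodd)
  have hσ : Function.Injective (φ.comp (MonoidHom.mulSingle _ v)) := by
    rw [hv, MonoidHom.coe_comp] at hφ
    exact Finite.injective_iff_surjective.2 hφ.of_comp
  refine ⟨v, ?_⟩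
  rw [hπ, hv, MonoidHom.comp_assoc, MonoidHom.ker_comp_of_injective _ _ hσ]

/-- Fix an odd prime `p`, with `C_2 = {±1} = ℤˣ` and `D_p` the dihedral
group of order `2p`.  Let `V` and `I` be (disjoint) finite sets.  If
`π : D_p^V × C_2^I → D_p` is a surjective group homomorphism with kernel `N`, then there is
some `v ∈ V` such that `N = ker (π_v)`, where `π_v` is the projection onto the `v`
coordinate. -/
theorem statement_2 (p : ℕ) (hp : p.Prime) (hodd : Odd p)
    (V I : Type) [Finite V] [Finite I]
    (π : ((V → DihedralGroup p) × (I → ℤˣ)) →* DihedralGroup p)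
    (hsurj : Function.Surjective π) :
    ∃ v : V, π.ker =
      ((Pi.evalMonoidHom (fun _ : V => DihedralGroup p) v).comp
        (MonoidHom.fst (V → DihedralGroup p) (I → ℤˣ))).ker :=
  statement_2_general p hp hodd V I π hsurj
end

section
/- Let V, V', and I be pairwise disjoint finite sets with |V| ≥ |V'|. If π : D_p^V × C_2^I → D_p^{V'} is a surjective group homomorphism, then there exists a subset V_0 ⊆ V with |V_0| = |V'| such that ker(π) = ⋂_{v∈V_0} ker(π_v). -/
/-!
Let `φ : D_p^V × A →* D_p` be surjective, `A` commutative. The images of the factors of the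
source commute pairwise and generate `D_p`, so an element commuting with all of them is central,
hence trivial (the centre of `D_p` is trivial for odd `p > 1`). This kills `A`. Some coordinate
`v` must hit a reflection `s`: otherwise all images are rotations, commute, and vanish. Every
other coordinate lands in the centralizer `{1, s}` of `s`, so it commutes with everything and
vanishes too. Hence `φ` factors through the `v`-th projection via a surjective, hence bijective,
endomorphism of `D_p`. Doing this for every coordinate of `π` gives an injection `V' → V`,
since distinct coordinates of a surjection have distinct kernels.
-/

open DihedralGroup

theorem MonoidHom.commute_apply_snd {M A N : Type*} [Monoid M] [CommMonoid A] [Monoid N]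
    (φ : M × A →* N) (a b : A) : Commute (φ (1, a)) (φ (1, b)) :=
  ((Commute.refl 1).prod (Commute.all a b)).map φ

theorem MonoidHom.injective_ker_eval_comp {G ι : Type*} [Group G] [DecidableEq ι]
    {H : ι → Type*} [∀ i, Group (H i)] [∀ i, Nontrivial (H i)] {π : G →* ∀ i, H i}
    (hπ : Function.Surjective π) :
    Function.Injective fun i => ((Pi.evalMonoidHom H i).comp π).ker := by
  intro i j hij
  by_contra hne
  obtain ⟨x, hx⟩ := exists_ne (1 : H i)
  obtain ⟨g, hg⟩ := hπ (Pi.mulSingle i x)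
  have hgj : g ∈ ((Pi.evalMonoidHom H j).comp π).ker := by
    simp [hg, Pi.mulSingle_eq_of_ne' hne]
  simp only at hij
  rw [← hij] at hgj
  simp [hg] at hgj
  exact hx hgj

theorem MonoidHom.ker_eq_iInf_ker_eval_comp {G ι : Type*} [Group G] {H : ι → Type*}
    [∀ i, Group (H i)] (π : G →* ∀ i, H i) :
    π.ker = ⨅ i, ((Pi.evalMonoidHom H i).comp π).ker := by
  ext g
  simp [funext_iff]

section Generators

variable {ι : Type*} [DecidableEq ι] {M : ι → Type*} [∀ i, Monoid (M i)]
  {A N : Type*} [Monoid A]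

theorem MonoidHom.pi_prod_ext [Finite ι] [Monoid N] {f g : (∀ i, M i) × A →* N}
    (hM : ∀ i x, f (Pi.mulSingle i x, 1) = g (Pi.mulSingle i x, 1))
    (hA : ∀ a, f (1, a) = g (1, a)) : f = g := by
  have hinl : f.comp (MonoidHom.inl _ _) = g.comp (MonoidHom.inl _ _) := MonoidHom.pi_ext hM
  ext ⟨x, a⟩
  rw [← Prod.fst_mul_snd (x, a), map_mul, map_mul]
  exact congr_arg₂ (· * ·) (DFunLike.congr_fun hinl x) (hA a)

theorem MonoidHom.commute_apply_mulSingle_of_ne [Monoid N] (φ : (∀ i, M i) × A →* N)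
    {i j : ι} (h : i ≠ j) (x : M i) (y : M j) :
    Commute (φ (Pi.mulSingle i x, 1)) (φ (Pi.mulSingle j y, 1)) :=
  ((Pi.mulSingle_commute h x y).prod (Commute.refl 1)).map φ

theorem MonoidHom.commute_apply_mulSingle_snd [Monoid N] (φ : (∀ i, M i) × A →* N) (i : ι)
    (x : M i) (a : A) : Commute (φ (Pi.mulSingle i x, 1)) (φ (1, a)) :=
  ((Commute.one_right _).prod (Commute.one_left a)).map φ

variable [Finite ι] [Group N] (φ : (∀ i, M i) × A →* N)

theorem MonoidHom.commute_apply_of_commute_generators {x : N}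
    (hM : ∀ i y, Commute x (φ (Pi.mulSingle i y, 1))) (hA : ∀ a, Commute x (φ (1, a)))
    (g : (∀ i, M i) × A) : Commute x (φ g) := by
  have hconj : (MulAut.conj x).toMonoidHom.comp φ = φ := by
    refine MonoidHom.pi_prod_ext (fun i y => ?_) (fun a => ?_) <;>
      simp [MulAut.conj_apply, (hM _ _).eq, (hA _).eq]
  have hg := DFunLike.congr_fun hconj g
  simp only [MonoidHom.coe_comp, Function.comp_apply, MulEquiv.coe_toMonoidHom,
    MulAut.conj_apply, mul_inv_eq_iff_eq_mul] at hg
  exact hg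

theorem MonoidHom.eq_one_of_commute_generators (hφ : Function.Surjective φ)
    (hN : Subgroup.center N = ⊥) {x : N}
    (hM : ∀ i y, Commute x (φ (Pi.mulSingle i y, 1))) (hA : ∀ a, Commute x (φ (1, a))) :
    x = 1 := by
  rw [← Subgroup.mem_bot, ← hN, Subgroup.mem_center_iff]
  intro z
  obtain ⟨g, rfl⟩ := hφ z
  exact (φ.commute_apply_of_commute_generators hM hA g).eq.symm

end Generators

namespace DihedralGroup

variable {n : ℕ}

theorem eq_one_or_eq_sr_of_commute_sr (hn : Odd n) {x : DihedralGroup n} {j : ZMod n}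
    (h : Commute x (sr j)) : x = 1 ∨ x = sr j := by
  rcases x with i | i
  · left
    have hi : i + i = 0 := by
      have := sr.inj h.eq
      linear_combination -this
    rw [ZMod.add_self_eq_zero_iff_eq_zero hn] at hi
    rw [hi, r_zero]
  · right
    have hij : (j - i) + (j - i) = 0 := by
      have := r.inj h.eq
      linear_combination this
    rw [ZMod.add_self_eq_zero_iff_eq_zero hn, sub_eq_zero] at hij
    rw [hij]

variable {V A : Type*} [Finite V] [DecidableEq V] [CommGroup A]
  {φ : (V → DihedralGroup n) × A →* DihedralGroup n}

theorem apply_snd_eq_one (hn : Odd n) (hn1 : n ≠ 1) (hφ : Function.Surjective φ) (c : A) :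
    φ (1, c) = 1 :=
  φ.eq_one_of_commute_generators hφ (center_eq_bot_of_odd_ne_one hn hn1)
    (fun v a => (φ.commute_apply_mulSingle_snd v a c).symm) (φ.commute_apply_snd c)

theorem exists_apply_mulSingle_eq_sr (hn : Odd n) (hn1 : n ≠ 1) (hφ : Function.Surjective φ) :
    ∃ v a j, φ (Pi.mulSingle v a, 1) = sr j := by
  by_contra! hsr
  have hrot : ∀ v a, ∃ i, φ (Pi.mulSingle v a, 1) = r i := by
    intro v a
    rcases h : φ (Pi.mulSingle v a, 1) with i | j
    · exact ⟨i, rfl⟩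
    · exact absurd h (hsr v a j)
  have hcomm : ∀ v a w b, Commute (φ (Pi.mulSingle v a, 1)) (φ (Pi.mulSingle w b, 1)) := by
    intro v a w b
    obtain ⟨i, hi⟩ := hrot v a
    obtain ⟨k, hk⟩ := hrot w b
    rw [hi, hk, Commute, SemiconjBy, r_mul_r, r_mul_r, add_comm]
  have htriv : φ = 1 := MonoidHom.pi_prod_ext
    (fun v a => φ.eq_one_of_commute_generators hφ (center_eq_bot_of_odd_ne_one hn hn1)
      (hcomm v a) (φ.commute_apply_mulSingle_snd v a))
    (apply_snd_eq_one hn hn1 hφ)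
  obtain ⟨g, hg⟩ := hφ (sr 0)
  rw [htriv, MonoidHom.one_apply, one_def] at hg
  cases hg

theorem apply_mulSingle_eq_one_of_ne (hn : Odd n) (hn1 : n ≠ 1) (hφ : Function.Surjective φ)
    {v w : V} {a : DihedralGroup n} {j : ZMod n}
    (hv : φ (Pi.mulSingle v a, 1) = sr j) (hw : w ≠ v) (b : DihedralGroup n) :
    φ (Pi.mulSingle w b, 1) = 1 := by
  have hcent : ∀ b, φ (Pi.mulSingle w b, 1) = 1 ∨ φ (Pi.mulSingle w b, 1) = sr j := fun b =>
    eq_one_or_eq_sr_of_commute_sr hn (hv ▸ φ.commute_apply_mulSingle_of_ne hw b a)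
  refine φ.eq_one_of_commute_generators hφ (center_eq_bot_of_odd_ne_one hn hn1)
    (fun u b' => ?_) (φ.commute_apply_mulSingle_snd w b)
  rcases eq_or_ne w u with rfl | hu
  · rcases hcent b with h | h <;> rcases hcent b' with h' | h' <;> simp [h, h']
  · exact φ.commute_apply_mulSingle_of_ne hu b b'

theorem exists_ker_eq_ker_eval (hn : Odd n) (hn1 : n ≠ 1) (hφ : Function.Surjective φ) :
    ∃ v, φ.ker =
      ((Pi.evalMonoidHom (fun _ : V => DihedralGroup n) v).comp (MonoidHom.fst _ A)).ker := by
  obtain ⟨v, a, j, hv⟩ := exists_apply_mulSingle_eq_sr hn hn1 hφ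
  set ψ := φ.comp ((MonoidHom.inl _ _).comp (MonoidHom.mulSingle _ v))
  have hfactor : φ = ψ.comp ((Pi.evalMonoidHom _ v).comp (MonoidHom.fst _ _)) := by
    refine MonoidHom.pi_prod_ext (fun w b => ?_) (fun c => ?_)
    · rcases eq_or_ne w v with rfl | hw
      · simp [ψ]
      · simp [ψ, hw, apply_mulSingle_eq_one_of_ne hn hn1 hφ hv hw, map_one]
    · simp [ψ, apply_snd_eq_one hn hn1 hφ]
  have : NeZero n := ⟨hn.pos.ne'⟩
  have hψ : Function.Injective ψ := Finite.injective_iff_surjective.mpr fun d => by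
    obtain ⟨g, rfl⟩ := hφ d
    exact ⟨g.1 v, by rw [hfactor]; rfl⟩
  exact ⟨v, by rw [hfactor, MonoidHom.ker_comp_of_injective _ _ hψ]⟩

end DihedralGroup

theorem statement_3_general (p : ℕ) (hp : p.Prime) (hodd : Odd p)
    (V V' I : Type) [Finite V] [Finite V']
    (π : ((V → DihedralGroup p) × (I → ℤˣ)) →* (V' → DihedralGroup p))
    (hsurj : Function.Surjective π) :
    ∃ V0 : Finset V, V0.card = Nat.card V' ∧
      π.ker = ⨅ v ∈ V0,
        ((Pi.evalMonoidHom (fun _ : V => DihedralGroup p) v).comp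
          (MonoidHom.fst (V → DihedralGroup p) (I → ℤˣ))).ker := by
  classical
  cases nonempty_fintype V'
  choose c hc using fun v' => DihedralGroup.exists_ker_eq_ker_eval
    (φ := (Pi.evalMonoidHom (fun _ : V' => DihedralGroup p) v').comp π) hodd hp.ne_one
    ((Function.surjective_eval v').comp hsurj)
  have hc_inj : Function.Injective c := fun a b hab =>
    MonoidHom.injective_ker_eval_comp hsurj (by simp only [hc, hab])
  refine ⟨Finset.univ.image c, by simp [Finset.card_image_of_injective _ hc_inj], ?_⟩
  rw [π.ker_eq_iInf_ker_eval_comp, Finset.iInf_finset_image]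
  simp [hc]

/-- Fix an odd prime `p`, with `C_2 = {±1} = ℤˣ` and `D_p` the dihedral
group of order `2p`.  Let `V`, `V'`, `I` be (pairwise disjoint) finite sets with
`|V| ≥ |V'|`.  If `π : D_p^V × C_2^I → D_p^{V'}` is a surjective group homomorphism, then
there is a subset `V₀ ⊆ V` with `|V₀| = |V'|` such that
`ker π = ⋂_{v ∈ V₀} ker (π_v)`, where `π_v` is the projection onto the `v` coordinate. -/
theorem statement_3 (p : ℕ) (hp : p.Prime) (hodd : Odd p)
    (V V' I : Type) [Finite V] [Finite V'] [Finite I]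
    (hcard : Nat.card V' ≤ Nat.card V)
    (π : ((V → DihedralGroup p) × (I → ℤˣ)) →* (V' → DihedralGroup p))
    (hsurj : Function.Surjective π) :
    ∃ V0 : Finset V, V0.card = Nat.card V' ∧
      π.ker = ⨅ v ∈ V0,
        ((Pi.evalMonoidHom (fun _ : V => DihedralGroup p) v).comp
          (MonoidHom.fst (V → DihedralGroup p) (I → ℤˣ))).ker :=
  statement_3_general p hp hodd V V' I π hsurj
end

section
/- For any graph Γ = (V,R), the Frattini subgroup of the profinite group G_Γ is trivial: Φ(G_Γ) = 1. -/
/-!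
Every open subgroup of prime index contains `Φ(G_Γ)`. At a vertex `v`, pulling back along
`π_v` the kernel of `τ` (index `2`) and the reflection subgroup `⟨β⟩` (index `p`) of `D_p`,
which meet trivially, kills the coordinate `a_v`. At an edge `r`, the image of `π_r` contains
the normal complement `C_q` of `D_p × D_p` in `W`, so the preimage of `D_p × D_p` has index `q`;
hence `b_r` lies in `D_p × D_p`, where it is determined by `λ(b_r) = (a_v, a_{v'}) = 1`.
-/

open Function

noncomputable section

/-- A discrete group is a topological group. -/
instance (priority := 50) discreteTopologicalGroup (G : Type*) [Group G] [TopologicalSpace G]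
    [DiscreteTopology G] : IsTopologicalGroup G where
  continuous_mul := continuous_of_discreteTopology
  continuous_inv := continuous_of_discreteTopology

/-- The sign epimorphism `τ : D_p → C_2 = {±1}` killing the rotations. -/
def dihedralSign (p : ℕ) : DihedralGroup p →* ℤˣ where
  toFun x := match x with
    | DihedralGroup.r _ => 1
    | DihedralGroup.sr _ => -1
  map_one' := rfl
  map_mul' a b := by cases a <;> cases b <;> rfl

/-- `{±1}` acts on a commutative group by exponentiation (i.e. `-1` acts by inversion). -/
def unitsIntAut (A : Type*) [CommGroup A] : ℤˣ →* MulAut A where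
  toFun u :=
    { toFun := fun x => x ^ (u : ℤ)
      invFun := fun x => x ^ (u : ℤ)
      left_inv := fun x => by rcases Int.units_eq_one_or u with h | h <;> simp [h]
      right_inv := fun x => by rcases Int.units_eq_one_or u with h | h <;> simp [h]
      map_mul' := fun x y => mul_zpow x y _ }
  map_one' := by ext x; simp
  map_mul' u v := by
    ext x
    rcases Int.units_eq_one_or u with h | h <;>
      rcases Int.units_eq_one_or v with h' | h' <;>
        simp [h, h']

/-- The action of `D_p × D_p` on `C_q` given by `(x,y) · g = g^(τ(x)τ(y))`. -/
def Wact (p q : ℕ) : DihedralGroup p × DihedralGroup p →* MulAut (Multiplicative (ZMod q)) :=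
  (unitsIntAut (Multiplicative (ZMod q))).comp
    (((dihedralSign p).comp (MonoidHom.fst _ _)) * ((dihedralSign p).comp (MonoidHom.snd _ _)))

/-- The group `W = C_q ⋊ (D_p × D_p)`. -/
abbrev Wgrp (p q : ℕ) : Type :=
  SemidirectProduct (Multiplicative (ZMod q)) (DihedralGroup p × DihedralGroup p) (Wact p q)

/-- The quotient map `λ : W → D_p × D_p`. -/
abbrev lamW (p q : ℕ) : Wgrp p q →* DihedralGroup p × DihedralGroup p :=
  SemidirectProduct.rightHom

/-- The group `G_Γ ≤ D_p^V × W^R` associated to a graph `Γ = (V, R)`. -/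
def GGamma (p q : ℕ) (V : Type*) (R : Set (V × V)) :
    Subgroup ((V → DihedralGroup p) × (R → Wgrp p q)) where
  carrier := {x | ∀ r : R,
    SemidirectProduct.rightHom (x.2 r) = (x.1 (r : V × V).1, x.1 (r : V × V).2)}
  one_mem' := by intro r; simp; rfl
  mul_mem' := by
    intro a b ha hb r
    simp only [Set.mem_setOf_eq] at ha hb
    simp only [Prod.snd_mul, Pi.mul_apply, map_mul, Prod.fst_mul, ha r, hb r, Prod.mk_mul_mk]
  inv_mem' := by
    intro a ha r
    simp only [Set.mem_setOf_eq] at ha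
    simp only [Prod.snd_inv, Pi.inv_apply, map_inv, Prod.fst_inv, ha r, Prod.inv_mk]

instance (n : ℕ) : TopologicalSpace (DihedralGroup n) := ⊥
instance (n : ℕ) : DiscreteTopology (DihedralGroup n) := ⟨rfl⟩
instance (p q : ℕ) : TopologicalSpace (Wgrp p q) := ⊥
instance (p q : ℕ) : DiscreteTopology (Wgrp p q) := ⟨rfl⟩

variable (p q : ℕ) (V : Type*) (R : Set (V × V))

/-- The coordinate projection `π_v : G_Γ → D_p` at a vertex `v`. -/
def vProj (v : V) : ↥(GGamma p q V R) →* DihedralGroup p :=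
  (Pi.evalMonoidHom (fun _ : V => DihedralGroup p) v).comp
    ((MonoidHom.fst _ _).comp (GGamma p q V R).subtype)

/-- The coordinate projection `π_r : G_Γ → W` at an edge `r`. -/
def eProj (r : R) : ↥(GGamma p q V R) →* Wgrp p q :=
  (Pi.evalMonoidHom (fun _ : R => Wgrp p q) r).comp
    ((MonoidHom.snd _ _).comp (GGamma p q V R).subtype)

variable (I : Type*)

/-- The coordinate projection `π_v : G_Γ × C_2^I → D_p` at a vertex `v`. -/
def vProjK (v : V) : (↥(GGamma p q V R) × (I → ℤˣ)) →* DihedralGroup p :=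
  (vProj p q V R v).comp (MonoidHom.fst _ _)

/-- The coordinate projection `π_r : G_Γ × C_2^I → W` at an edge `r`. -/
def eProjK (r : R) : (↥(GGamma p q V R) × (I → ℤˣ)) →* Wgrp p q :=
  (eProj p q V R r).comp (MonoidHom.fst _ _)

/-- The map `ξ_Γ : G_Γ → C_2^V`, `((a_v), (b_r)) ↦ (τ(a_v))_v`. -/
def xiGamma : ↥(GGamma p q V R) →* (V → ℤˣ) :=
  Pi.monoidHom fun v => (dihedralSign p).comp (vProj p q V R v)

end

open Function

open Subgroup

theorem Subgroup.isCoatom_of_index_prime {G : Type*} [Group G] {H : Subgroup G}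
    (h : H.index.Prime) : IsCoatom H := by
  refine ⟨fun hH => h.ne_one (hH ▸ index_top), fun K hK => ?_⟩
  rcases h.eq_one_or_self_of_dvd _ (index_dvd_of_le hK.le) with hK1 | hKH
  · exact index_eq_one.mp hK1
  · have hrel := relIndex_mul_index hK.le
    rw [hKH, Nat.mul_eq_right h.ne_zero, relIndex_eq_one] at hrel
    exact absurd hrel hK.not_ge

theorem Subgroup.IsComplement'.relIndex_eq_card {G : Type*} [Group G] {H K L : Subgroup G}
    (h : IsComplement' H K) (hHL : H ≤ L) : K.relIndex L = Nat.card H := by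
  have hH : K.relIndex H = Nat.card H := by
    rw [← inf_relIndex_right, h.disjoint.symm.eq_bot, relIndex_bot_left]
  rcases eq_or_ne (Nat.card H) 0 with h0 | h0
  · rw [h0] at hH ⊢
    exact relIndex_eq_zero_of_le_right hHL hH
  · have hK : K.relIndex ⊤ ≠ 0 := by rwa [relIndex_top_right, h.index_eq_card]
    have hL : K.relIndex L ≠ 0 := fun hL => hK (relIndex_eq_zero_of_le_right le_top hL)
    refine le_antisymm ?_ (hH ▸ relIndex_le_of_le_right hHL hL)
    rw [← h.index_eq_card, ← relIndex_top_right]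
    exact relIndex_le_of_le_right le_top hK

theorem SemidirectProduct.isComplement'_range_inl_range_inr {N G : Type*} [Group N] [Group G]
    {φ : G →* MulAut N} :
    (SemidirectProduct.inl : N →* N ⋊[φ] G).range.IsComplement'
      SemidirectProduct.inr.range := by
  refine isComplement'_of_disjoint_and_mul_eq_univ ?_ ?_
  · rw [disjoint_iff_inf_le]
    rintro x ⟨⟨n, rfl⟩, ⟨g, hg⟩⟩
    have hn : n = 1 := by simpa using (congrArg SemidirectProduct.left hg).symm
    simp [hn]
  · exact Set.eq_univ_of_forall fun x =>
      ⟨_, ⟨x.left, rfl⟩, _, ⟨x.right, rfl⟩, inl_left_mul_inr_right x⟩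

theorem frattiniOpen_le_comap_s5 {G F : Type*} [Group G] [TopologicalSpace G] [Group F]
    [TopologicalSpace F] [DiscreteTopology F] {φ : G →* F} (hφ : Continuous φ)
    {N : Subgroup F} (hN : (N.comap φ).index.Prime) : frattiniOpen G ≤ N.comap φ :=
  biInf_le _ ⟨(isOpen_discrete (N : Set F)).preimage hφ, isCoatom_of_index_prime hN⟩

theorem dihedralSign_surjective (n : ℕ) : Surjective (dihedralSign n) := by
  intro u
  rcases Int.units_eq_one_or u with rfl | rfl
  exacts [⟨1, rfl⟩, ⟨DihedralGroup.sr 0, rfl⟩]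

theorem index_ker_dihedralSign (n : ℕ) : (dihedralSign n).ker.index = 2 := by
  rw [index_ker, (dihedralSign n).range_eq_top_of_surjective (dihedralSign_surjective n),
    card_top, Nat.card_eq_fintype_card, Fintype.card_units_int]

theorem DihedralGroup.index_zpowers_sr {n : ℕ} (i : ZMod n) :
    (zpowers (DihedralGroup.sr i)).index = n := by
  have h := card_mul_index (zpowers (DihedralGroup.sr i))
  rw [Nat.card_zpowers, DihedralGroup.orderOf_sr, DihedralGroup.nat_card] at h
  omega

theorem ker_dihedralSign_inf_zpowers_sr {n : ℕ} (i : ZMod n) :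
    (dihedralSign n).ker ⊓ zpowers (DihedralGroup.sr i) = ⊥ := by
  rw [eq_bot_iff]
  rintro x ⟨hx, k, rfl⟩
  have hsq : DihedralGroup.sr i ^ (2 : ℤ) = 1 := by rw [zpow_two, DihedralGroup.sr_mul_self]
  beta_reduce at hx ⊢
  rcases Int.even_or_odd k with ⟨m, rfl⟩ | ⟨m, rfl⟩
  · rw [← two_mul, zpow_mul, hsq, one_zpow]
    exact one_mem _
  · rw [zpow_add, zpow_mul, hsq, one_zpow, one_mul, zpow_one] at hx
    have hsign : dihedralSign n (DihedralGroup.sr i) = -1 := rfl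
    exact absurd (hsign.symm.trans hx) (by decide)

section GGamma

variable {p q : ℕ} {V : Type*} {R : Set (V × V)}

theorem continuous_vProj (v : V) : Continuous (vProj p q V R v) :=
  (continuous_apply v).comp (continuous_fst.comp continuous_subtype_val)

theorem continuous_eProj (r : R) : Continuous (eProj p q V R r) :=
  (continuous_apply r).comp (continuous_snd.comp continuous_subtype_val)

theorem vProj_surjective (v : V) : Surjective (vProj p q V R v) := by
  classical
  intro a
  let f : V → DihedralGroup p := Pi.mulSingle v a
  exact ⟨⟨(f, fun r => SemidirectProduct.inr (f r.1.1, f r.1.2)),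
    fun r => SemidirectProduct.rightHom_inr _⟩, by simp [vProj, f]⟩

theorem rightHom_eProj (x : GGamma p q V R) (r : R) :
    SemidirectProduct.rightHom (eProj p q V R r x) =
      (vProj p q V R r.1.1 x, vProj p q V R r.1.2 x) :=
  x.2 r

theorem range_inl_le_range_eProj (r : R) :
    (SemidirectProduct.inl : Multiplicative (ZMod q) →* Wgrp p q).range ≤
      (eProj p q V R r).range := by
  classical
  rintro _ ⟨c, rfl⟩
  refine ⟨⟨(1, Pi.mulSingle r (SemidirectProduct.inl c)), fun s => ?_⟩,
    Pi.mulSingle_eq_same r _⟩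
  simp [Pi.mulSingle_apply, apply_ite, Prod.one_eq_mk]

theorem vProj_eq_one_of_mem_frattiniOpen (hp : p.Prime) {x : GGamma p q V R}
    (hx : x ∈ frattiniOpen (GGamma p q V R)) (v : V) : vProj p q V R v x = 1 := by
  have hsign := frattiniOpen_le_comap_s5 (continuous_vProj v) (N := (dihedralSign p).ker)
    (by rw [index_comap_of_surjective _ (vProj_surjective v), index_ker_dihedralSign]
        exact Nat.prime_two) hx
  have hrefl := frattiniOpen_le_comap_s5 (continuous_vProj v) (N := zpowers (DihedralGroup.sr 0))
    (by rw [index_comap_of_surjective _ (vProj_surjective v), DihedralGroup.index_zpowers_sr]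
        exact hp) hx
  rw [← mem_bot, ← ker_dihedralSign_inf_zpowers_sr (0 : ZMod p)]
  exact ⟨hsign, hrefl⟩

theorem eProj_eq_one_of_mem_frattiniOpen (hp : p.Prime) (hq : q.Prime) {x : GGamma p q V R}
    (hx : x ∈ frattiniOpen (GGamma p q V R)) (r : R) : eProj p q V R r x = 1 := by
  have hcompl := SemidirectProduct.isComplement'_range_inl_range_inr
    (N := Multiplicative (ZMod q)) (φ := Wact p q)
  have hinr : eProj p q V R r x ∈ SemidirectProduct.inr.range :=
    mem_comap.mp <| frattiniOpen_le_comap_s5 (continuous_eProj r)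
      (by rw [index_comap, hcompl.relIndex_eq_card (range_inl_le_range_eProj r),
            Nat.card_congr (MonoidHom.ofInjective SemidirectProduct.inl_injective).symm.toEquiv,
            Nat.card_congr Multiplicative.toAdd, Nat.card_zmod]
          exact hq) hx
  have hinl : eProj p q V R r x ∈ SemidirectProduct.inl.range := by
    rw [SemidirectProduct.range_inl_eq_ker_rightHom, MonoidHom.mem_ker, rightHom_eProj,
      vProj_eq_one_of_mem_frattiniOpen hp hx, vProj_eq_one_of_mem_frattiniOpen hp hx]
    rfl
  rw [← mem_bot, ← hcompl.disjoint.eq_bot]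
  exact ⟨hinl, hinr⟩

end GGamma

theorem statement_5_general (p q : ℕ) (hp : p.Prime) (hq : q.Prime) (V : Type) (R : Set (V × V)) :
    frattiniOpen ↥(GGamma p q V R) = ⊥ := by
  refine eq_bot_iff.mpr fun x hx => Subtype.ext (Prod.ext ?_ ?_)
  · funext v
    exact vProj_eq_one_of_mem_frattiniOpen hp hx v
  · funext r
    exact eProj_eq_one_of_mem_frattiniOpen hp hq hx r

/-- For any graph `Γ = (V, R)` (edges listed with a single orientation and
no loops), the Frattini subgroup of the profinite group `G_Γ` is trivial: `Φ(G_Γ) = 1`. -/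
theorem statement_5 (p q : ℕ) (hp : p.Prime) (hq : q.Prime) (hpo : Odd p) (hqo : Odd q)
    (hpq : p ≠ q) (V : Type) (R : Set (V × V))
    (hloop : ∀ v : V, (v, v) ∉ R) (hor : ∀ a b : V, (a, b) ∈ R → (b, a) ∉ R) :
    frattiniOpen ↥(GGamma p q V R) = ⊥ :=
  statement_5_general p q hp hq V R
end

section
/- For any automorphisms σ₁, σ₂ of D_p, there is an automorphism ν of W such that λ ∘ ν = (σ₁ × σ₂) ∘ λ. -/
open Function

/-! For odd `p` the rotations of `D_p` are exactly the solutions of `x ^ p = 1`, so every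
automorphism of `D_p` preserves the sign `τ`. Hence `σ₁ × σ₂` commutes with the action of
`D_p × D_p` on `C_q`, and `ν` can be taken to be the identity on `C_q` and `σ₁ × σ₂` on the
quotient. -/

section DihedralSign

open DihedralGroup

variable {n : ℕ}

@[simp]
lemma dihedralSign_r (i : ZMod n) : dihedralSign n (r i) = 1 := rfl

@[simp]
lemma dihedralSign_sr (i : ZMod n) : dihedralSign n (sr i) = -1 := rfl

lemma dihedralSign_eq_one_iff_pow_eq_one (hn : Odd n) (x : DihedralGroup n) :
    dihedralSign n x = 1 ↔ x ^ n = 1 := by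
  cases x with
  | r i => simp [r_pow, ← r_zero]
  | sr i =>
    obtain ⟨k, rfl⟩ := hn
    rw [pow_succ, pow_mul, sq, sr_mul_self, one_pow, one_mul, dihedralSign_sr, one_def]
    exact iff_of_false (by decide) (by simp only [reduceCtorEq, not_false_eq_true])

lemma dihedralSign_mulEquiv_apply (hn : Odd n) (σ : DihedralGroup n ≃* DihedralGroup n)
    (x : DihedralGroup n) : dihedralSign n (σ x) = dihedralSign n x := by
  have hiff : dihedralSign n (σ x) = 1 ↔ dihedralSign n x = 1 := by
    rw [dihedralSign_eq_one_iff_pow_eq_one hn, dihedralSign_eq_one_iff_pow_eq_one hn, ← map_pow,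
      map_eq_one_iff σ σ.injective]
  rcases Int.units_eq_one_or (dihedralSign n (σ x)) with h | h <;>
    rcases Int.units_eq_one_or (dihedralSign n x) with h' | h' <;>
    simp_all

end DihedralSign

lemma Wact_map_mulEquiv (p q : ℕ) (hpo : Odd p) (σ₁ σ₂ : DihedralGroup p ≃* DihedralGroup p)
    (g : DihedralGroup p × DihedralGroup p) : Wact p q (σ₁ g.1, σ₂ g.2) = Wact p q g := by
  change unitsIntAut _ (dihedralSign p (σ₁ g.1) * dihedralSign p (σ₂ g.2)) =
    unitsIntAut _ (dihedralSign p g.1 * dihedralSign p g.2)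
  rw [dihedralSign_mulEquiv_apply hpo, dihedralSign_mulEquiv_apply hpo]

theorem statement_12_general (p q : ℕ) (hpo : Odd p) (σ₁ σ₂ : DihedralGroup p ≃* DihedralGroup p) :
    ∃ ν : Wgrp p q ≃* Wgrp p q, ∀ w : Wgrp p q,
      lamW p q (ν w) = (σ₁ (lamW p q w).1, σ₂ (lamW p q w).2) :=
  ⟨SemidirectProduct.congr (MulEquiv.refl _) (σ₁.prodCongr σ₂) fun g =>
      (Wact_map_mulEquiv p q hpo σ₁ σ₂ g).symm,
    fun _ => rfl⟩

/-- For any automorphisms `σ₁, σ₂` of `D_p` there is an automorphism `ν`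
of `W = C_q ⋊ (D_p × D_p)` such that `λ ∘ ν = (σ₁ × σ₂) ∘ λ`. -/
theorem statement_12 (p q : ℕ) (hp : p.Prime) (hq : q.Prime) (hpo : Odd p) (hqo : Odd q)
    (hpq : p ≠ q) (σ₁ σ₂ : DihedralGroup p ≃* DihedralGroup p) :
    ∃ ν : Wgrp p q ≃* Wgrp p q, ∀ w : Wgrp p q,
      lamW p q (ν w) = (σ₁ (lamW p q w).1, σ₂ (lamW p q w).2) :=
  statement_12_general p q hpo σ₁ σ₂
end

section
/- Let ℓ be a prime and G a profinite group with a closed normal ℓ-Sylow subgroup S_ℓ, i.e., S_ℓ is a closed normal pro-ℓ subgroup of G containing every closed pro-ℓ subgroup of G. Then for all closed normal subgroups A and B of G: S_ℓA ∩ S_ℓB = S_ℓ(A ∩ B). -/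
open Function

/-!
Let `F` be a group with a normal subgroup `S` whose order is prime to its index, and `A`, `B`
subgroups with `B` normal. Every `x ∈ SA ∩ SB` is `s a` with `a ∈ K = A ∩ SB`, and the index of
`S(A ∩ B) ∩ K` in `K` divides both `[K : K ∩ B]`, hence `|S|`, and `[F : S]`; so
`K ≤ S(A ∩ B)`.

In the profinite group `G`, every `ℓ`-subgroup of a finite quotient `G/N` lifts to a closed
pro-`ℓ` subgroup (a minimal closed subgroup mapping onto it, found by Zorn's lemma), so the
image of `Sℓ` in `G/N` is a normal Sylow subgroup. Hence `x ∈ SℓA ∩ SℓB` lies in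
`Sℓ(AN ∩ BN)` for every open normal `N`, and compactness of the coset `Sℓ x` gives
`x ∈ Sℓ(A ∩ B)`.
-/

open Subgroup

namespace Subgroup

variable {G : Type*} [Group G]

theorem relIndex_dvd_relIndex_of_le_of_normal {H K L : Subgroup G} [H.Normal] (hKL : K ≤ L) :
    H.relIndex K ∣ H.relIndex L := by
  rw [← relIndex_subgroupOf hKL]
  exact relIndex_dvd_index_of_normal _ _

theorem sup_inf_sup_le_of_coprime {S : Subgroup G} [S.Normal]
    (hS : (Nat.card S).Coprime S.index) (A B : Subgroup G) [B.Normal] :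
    (S ⊔ A) ⊓ (S ⊔ B) ≤ S ⊔ (A ⊓ B) := by
  set K := A ⊓ (S ⊔ B)
  have hK : K ≤ S ⊔ (A ⊓ B) := by
    refine relIndex_eq_one.mp (Nat.eq_one_of_dvd_coprimes hS ?_ ?_)
    · calc (S ⊔ (A ⊓ B)).relIndex K ∣ (B ⊓ K).relIndex K :=
            relIndex_dvd_of_le_left _ fun x hx => mem_sup_right ⟨hx.2.1, hx.1⟩
        _ = B.relIndex K := inf_relIndex_right B K
        _ ∣ B.relIndex (S ⊔ B) := relIndex_dvd_relIndex_of_le_of_normal inf_le_right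
        _ = B.relIndex S := relIndex_sup_right S B
        _ ∣ Nat.card S := relIndex_dvd_card B S
    · calc (S ⊔ (A ⊓ B)).relIndex K ∣ S.relIndex K := relIndex_dvd_of_le_left _ le_sup_left
        _ ∣ S.index := relIndex_dvd_index_of_normal S K
  rintro x ⟨hxA, hxB⟩
  obtain ⟨s, hs, a, ha, rfl⟩ := mem_sup_of_normal_left.mp hxA
  have haK : a ∈ K := ⟨ha, by simpa using mul_mem (inv_mem (mem_sup_left hs)) hxB⟩
  exact mul_mem (mem_sup_left hs) (hK haK)

theorem sup_inf_sup_le_of_coprime_map {N S : Subgroup G} [N.Normal] [S.Normal]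
    (hS : (Nat.card (S.map (QuotientGroup.mk' N))).Coprime (S.map (QuotientGroup.mk' N)).index)
    (A B : Subgroup G) [B.Normal] :
    (S ⊔ A) ⊓ (S ⊔ B) ≤ S ⊔ ((A ⊔ N) ⊓ (B ⊔ N)) := by
  set f := QuotientGroup.mk' N
  have hf : Function.Surjective f := QuotientGroup.mk'_surjective N
  have : (S.map f).Normal := ‹S.Normal›.map f hf
  have : (B.map f).Normal := ‹B.Normal›.map f hf
  have hAB : A.map f ⊓ B.map f = ((A ⊔ N) ⊓ (B ⊔ N)).map f := by
    rw [← map_comap_eq_self_of_surjective hf (A.map f ⊓ B.map f), comap_inf, comap_map_eq,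
      comap_map_eq, QuotientGroup.ker_mk']
  have hle : ((S ⊔ A) ⊓ (S ⊔ B)).map f ≤ (S ⊔ ((A ⊔ N) ⊓ (B ⊔ N))).map f := by
    calc ((S ⊔ A) ⊓ (S ⊔ B)).map f ≤ (S.map f ⊔ A.map f) ⊓ (S.map f ⊔ B.map f) := by
          simpa only [map_sup] using map_inf_le (S ⊔ A) (S ⊔ B) f
      _ ≤ S.map f ⊔ (A.map f ⊓ B.map f) := sup_inf_sup_le_of_coprime hS _ _
      _ = (S ⊔ ((A ⊔ N) ⊓ (B ⊔ N))).map f := by rw [hAB, map_sup]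
  rw [map_le_iff_le_comap, comap_map_eq, QuotientGroup.ker_mk'] at hle
  exact hle.trans (sup_le le_rfl (le_sup_of_le_right (le_inf le_sup_right le_sup_right)))

end Subgroup

section CompactGroup

variable {G Q : Type*} [Group G] [TopologicalSpace G] [Group Q] [TopologicalSpace Q]
  {f : G →* Q}

theorem MonoidHom.isOpen_ker_of_continuous [DiscreteTopology Q] (hf : Continuous f) :
    IsOpen (f.ker : Set G) :=
  (isOpen_discrete {1}).preimage hf

theorem Subgroup.map_sInf_eq_of_isChain [CompactSpace G] [T1Space Q] (hf : Continuous f)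
    {c : Set (Subgroup G)} (hne : c.Nonempty) (hc : IsChain (· ≤ ·) c)
    (hcl : ∀ T ∈ c, IsClosed (T : Set G)) {T' : Subgroup Q} (hmap : ∀ T ∈ c, T.map f = T') :
    (sInf c).map f = T' := by
  obtain ⟨T₀, hT₀⟩ := hne
  refine le_antisymm ((map_mono (sInf_le hT₀)).trans (hmap T₀ hT₀).le) fun q hq => ?_
  have : Nonempty c := ⟨⟨T₀, hT₀⟩⟩
  set t : c → Set G := fun T => (T : Set G) ∩ f ⁻¹' {q}
  have htd : Directed (· ⊇ ·) t := fun T₁ T₂ => by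
    rcases hc.total T₁.2 T₂.2 with h | h
    · exact ⟨T₁, subset_rfl, Set.inter_subset_inter_left _ h⟩
    · exact ⟨T₂, Set.inter_subset_inter_left _ h, subset_rfl⟩
  have htn : ∀ T, (t T).Nonempty := fun ⟨T, hT⟩ => by
    obtain ⟨y, hy, hyq⟩ := (hmap T hT).symm ▸ hq
    exact ⟨y, hy, hyq⟩
  have htc : ∀ T, IsClosed (t T) := fun ⟨T, hT⟩ =>
    (hcl T hT).inter (isClosed_singleton.preimage hf)
  obtain ⟨y, hy⟩ := IsCompact.nonempty_iInter_of_directed_nonempty_isCompact_isClosed t htd htn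
    (fun T => (htc T).isCompact) htc
  have hyt : ∀ T, y ∈ t T := Set.mem_iInter.mp hy
  exact ⟨y, mem_sInf.mpr fun T hT => (hyt ⟨T, hT⟩).1, (hyt ⟨T₀, hT₀⟩).2⟩

theorem Subgroup.exists_minimal_isClosed_map_eq [CompactSpace G] [T1Space Q]
    (hf : Continuous f) {T₀ : Subgroup G} (hT₀ : IsClosed (T₀ : Set G)) :
    ∃ T, Minimal (fun T : Subgroup G => IsClosed (T : Set G) ∧ T.map f = T₀.map f) T := by
  set s : Set (Subgroup G)ᵒᵈ := {T | IsClosed (T.ofDual : Set G) ∧ T.ofDual.map f = T₀.map f}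
  have hchain : ∀ c ⊆ s, IsChain (· ≤ ·) c → ∀ T ∈ c, ∃ lb ∈ s, ∀ T' ∈ c, T' ≤ lb := by
    intro c hcs hc T hT
    refine ⟨OrderDual.toDual (sInf (OrderDual.ofDual '' c)), ⟨?_, ?_⟩, fun T' hT' => ?_⟩
    · change IsClosed ((sInf _ : Subgroup G) : Set G)
      rw [coe_sInf]
      exact isClosed_biInter fun _ ⟨T', hT', hT'eq⟩ => hT'eq ▸ (hcs hT').1
    · exact map_sInf_eq_of_isChain hf (Set.Nonempty.image _ ⟨T, hT⟩)
        (hc.symm.image_of_map_rel _ (· ≤ ·) _ fun _ _ h => h)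
        (fun _ ⟨T', hT', hT'eq⟩ => hT'eq ▸ (hcs hT').1)
        (fun _ ⟨T', hT', hT'eq⟩ => hT'eq ▸ (hcs hT').2)
    · exact sInf_le (s := OrderDual.ofDual '' c) ⟨T', hT', rfl⟩
  obtain ⟨T, -, hT⟩ := zorn_le_nonempty₀ s hchain (OrderDual.toDual T₀) ⟨hT₀, rfl⟩
  exact ⟨T.ofDual, hT⟩

theorem Subgroup.isProL_of_minimal [IsTopologicalGroup G] [DiscreteTopology Q] [Finite Q]
    {ℓ : ℕ} [Fact ℓ.Prime] (hf : Continuous f) {T' : Subgroup Q} (hT' : IsPGroup ℓ T')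
    {T : Subgroup G} (hT : Minimal (fun T : Subgroup G => IsClosed (T : Set G) ∧ T.map f = T') T) :
    IsProL ℓ T := by
  intro Q₁ _ _ φ hφ hker
  obtain ⟨hTc, hTmap⟩ := hT.prop
  let fT : T →* T' := (f.comp T.subtype).codRestrict T' fun t => hTmap ▸ mem_map_of_mem f t.2
  let g : T →* Q₁ × T' := φ.prod fT
  let j : g.range →* T' := (MonoidHom.snd _ _).comp g.range.subtype
  have hj : Function.Surjective j := by
    rintro ⟨q, hq⟩
    obtain ⟨t, ht, rfl⟩ := hTmap ▸ hq
    exact ⟨g.rangeRestrict ⟨t, ht⟩, rfl⟩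
  -- The preimage in `T` of a Sylow subgroup of the finite group `g(T)` still maps onto the
  -- `ℓ`-group `T'`, so by minimality it is all of `T`.
  obtain ⟨P⟩ : Nonempty (Sylow ℓ g.range) := inferInstance
  have hPj : P.map j = ⊤ := by
    rw [← Sylow.coe_mapSurjective hj]
    exact ((P.mapSurjective hj).is_maximal' (hT'.to_subgroup ⊤) le_top).symm
  set W : Subgroup T := P.comap g.rangeRestrict
  have hWo : IsOpen (W : Set T) := by
    refine isOpen_mono (g.ker_rangeRestrict ▸ ker_le_comap _ _) ?_
    rw [MonoidHom.ker_prod, coe_inf, MonoidHom.ker_codRestrict]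
    exact hker.inter (MonoidHom.isOpen_ker_of_continuous (hf.comp continuous_subtype_val))
  have hWT : T ≤ W.map T.subtype := by
    refine hT.2 ⟨?_, ?_⟩ (map_subtype_le W)
    · rw [coe_map]
      exact hTc.isClosedEmbedding_subtypeVal.isClosedMap _ (isClosed_of_isOpen W hWo)
    · have hfT : f.comp T.subtype = T'.subtype.comp (j.comp g.rangeRestrict) := rfl
      rw [map_map, hfT, ← map_map, ← map_map, map_comap_eq_self_of_surjective
        g.rangeRestrict_surjective, hPj, ← MonoidHom.range_eq_map, range_subtype]
  have hW : ∀ t, g.rangeRestrict t ∈ P := fun t => by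
    obtain ⟨w, hw, hwt⟩ := hWT t.2
    exact Subtype.ext hwt ▸ hw
  refine P.isPGroup'.of_surjective
    ((MonoidHom.fst _ _).comp (g.range.subtype.comp (P : Subgroup g.range).subtype)) fun q => ?_
  obtain ⟨t, rfl⟩ := hφ q
  exact ⟨⟨g.rangeRestrict t, hW t⟩, rfl⟩

theorem OpenNormalSubgroup.exists_isProL_map_mk'_eq [IsTopologicalGroup G] [CompactSpace G]
    {ℓ : ℕ} [Fact ℓ.Prime] (N : OpenNormalSubgroup G) {T' : Subgroup (G ⧸ (N : Subgroup G))} (hT' : IsPGroup ℓ T') :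
    ∃ T : Subgroup G, IsClosed (T : Set G) ∧ IsProL ℓ T ∧ T.map (QuotientGroup.mk' N) = T' := by
  set f := QuotientGroup.mk' (N : Subgroup G)
  have hf : Continuous f := QuotientGroup.continuous_mk
  have hN : (N : Subgroup G) ≤ T'.comap f :=
    (QuotientGroup.ker_mk' _).symm.le.trans (ker_le_comap f T')
  obtain ⟨T, hT⟩ :=
    exists_minimal_isClosed_map_eq hf (isClosed_of_isOpen _ (isOpen_mono hN N.isOpen'))
  rw [map_comap_eq_self_of_surjective (QuotientGroup.mk'_surjective _)] at hT
  exact ⟨T, hT.prop.1, isProL_of_minimal hf hT' hT, hT.prop.2⟩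

end CompactGroup

theorem OpenNormalSubgroup.coprime_card_map_mk'_index {G : Type} [Group G] [TopologicalSpace G]
    [IsTopologicalGroup G] [CompactSpace G] {ℓ : ℕ} [Fact ℓ.Prime] {S : Subgroup G}
    (hSpro : IsProL ℓ S)
    (hSmax : ∀ K : Subgroup G, IsClosed (K : Set G) → IsProL ℓ K → K ≤ S)
    (N : OpenNormalSubgroup G) :
    (Nat.card (S.map (QuotientGroup.mk' N))).Coprime (S.map (QuotientGroup.mk' N)).index := by
  set f := QuotientGroup.mk' (N : Subgroup G)
  have hSf : IsPGroup ℓ (S.map f) := by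
    have hrange : S.map f = (f.comp S.subtype).range := by
      rw [MonoidHom.range_comp, range_subtype]
    rw [hrange]
    refine hSpro _ _ (f.comp S.subtype).rangeRestrict_surjective ?_
    rw [MonoidHom.ker_rangeRestrict]
    exact MonoidHom.isOpen_ker_of_continuous
      (QuotientGroup.continuous_mk.comp continuous_subtype_val)
  let P : Sylow ℓ (G ⧸ (N : Subgroup G)) := ⟨S.map f, hSf, fun hT' hle => by
    obtain ⟨T, hTc, hTpro, rfl⟩ := N.exists_isProL_map_mk'_eq hT'
    exact le_antisymm (map_mono (hSmax T hTc hTpro)) hle⟩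
  exact P.card_coprime_index

section ProfiniteGroup

variable {G : Type*} [Group G] [TopologicalSpace G] [IsTopologicalGroup G] [CompactSpace G]
  [TotallyDisconnectedSpace G]

theorem Subgroup.iInter_sup_openNormalSubgroup {C : Subgroup G} (hC : IsClosed (C : Set G)) :
    ⋂ N : OpenNormalSubgroup G, ((C ⊔ (N : Subgroup G) : Subgroup G) : Set G) = C := by
  refine subset_antisymm (fun x hx => ?_)
    (Set.subset_iInter fun N => SetLike.coe_subset_coe.mpr le_sup_left)
  by_contra hxC
  have hU : IsOpen ((x * ·) ⁻¹' (C : Set G)ᶜ) := hC.isOpen_compl.preimage (by fun_prop)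
  obtain ⟨N, hN⟩ :=
    ProfiniteGrp.exist_openNormalSubgroup_sub_open_nhds_of_one hU (by simpa using hxC)
  obtain ⟨c, hc, n, hn, rfl⟩ := mem_sup_of_normal_right.mp (Set.mem_iInter.mp hx N)
  exact hN (inv_mem hn) (by simpa using hc)

theorem Subgroup.mem_sup_inf_of_forall_openNormalSubgroup {S A B : Subgroup G} [S.Normal]
    (hS : IsClosed (S : Set G)) (hA : IsClosed (A : Set G)) (hB : IsClosed (B : Set G)) {x : G}
    (hx : ∀ N : OpenNormalSubgroup G, x ∈ S ⊔ ((A ⊔ (N : Subgroup G)) ⊓ (B ⊔ (N : Subgroup G)))) :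
    x ∈ S ⊔ (A ⊓ B) := by
  set E := (· * x⁻¹) ⁻¹' (S : Set G)
  set t := fun N : OpenNormalSubgroup G =>
    E ∩ (((A ⊔ (N : Subgroup G)) ⊓ (B ⊔ (N : Subgroup G)) : Subgroup G) : Set G)
  have hne : Nonempty (OpenNormalSubgroup G) :=
    ⟨{ toOpenSubgroup := ⊤, isNormal' := by rw [OpenSubgroup.toSubgroup_top]; infer_instance }⟩
  have htc : ∀ N, IsClosed (t N) := fun N =>
    (hS.preimage (by fun_prop)).inter <| isClosed_of_isOpen _ <|
      isOpen_mono (le_inf le_sup_right le_sup_right) N.isOpen'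
  have htn : ∀ N, (t N).Nonempty := fun N => by
    obtain ⟨s, hs, y, hy, rfl⟩ := mem_sup_of_normal_left.mp (hx N)
    exact ⟨y, by simpa [E, mul_assoc] using hs, hy⟩
  have htd : Monotone t := fun N M hNM => by
    have hNM' : (N : Subgroup G) ≤ M := fun _ h => hNM h
    exact Set.inter_subset_inter_right _
      (inf_le_inf (sup_le_sup_left hNM' _) (sup_le_sup_left hNM' _))
  obtain ⟨y, hy⟩ := IsCompact.nonempty_iInter_of_directed_nonempty_isCompact_isClosed t
    htd.directed_ge htn (fun N => (htc N).isCompact) htc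
  have hyt : ∀ N, y ∈ t N := Set.mem_iInter.mp hy
  have hyA : y ∈ A := by
    rw [← SetLike.mem_coe, ← iInter_sup_openNormalSubgroup hA]
    exact Set.mem_iInter.mpr fun N => (hyt N).2.1
  have hyB : y ∈ B := by
    rw [← SetLike.mem_coe, ← iInter_sup_openNormalSubgroup hB]
    exact Set.mem_iInter.mpr fun N => (hyt N).2.2
  have hyE : y * x⁻¹ ∈ S := (hyt hne.some).1
  simpa using mul_mem (mem_sup_left (inv_mem hyE)) (mem_sup_right ⟨hyA, hyB⟩ : y ∈ S ⊔ (A ⊓ B))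

end ProfiniteGroup

theorem statement_16_general (ℓ : ℕ) (hl : ℓ.Prime) (G : Type) [Group G] [TopologicalSpace G]
    [IsTopologicalGroup G] [CompactSpace G] [TotallyDisconnectedSpace G]
    (Sl : Subgroup G) [Sl.Normal] (hSc : IsClosed (Sl : Set G))
    (hSpro : IsProL ℓ ↥Sl)
    (hSmax : ∀ K : Subgroup G, IsClosed (K : Set G) → IsProL ℓ ↥K → K ≤ Sl)
    (A B : Subgroup G) [B.Normal]
    (hAc : IsClosed (A : Set G)) (hBc : IsClosed (B : Set G)) :
    (Sl ⊔ A) ⊓ (Sl ⊔ B) = Sl ⊔ (A ⊓ B) := by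
  have := Fact.mk hl
  refine le_antisymm (fun x hx => ?_)
    (le_inf (sup_le_sup_left inf_le_left Sl) (sup_le_sup_left inf_le_right Sl))
  exact mem_sup_inf_of_forall_openNormalSubgroup hSc hAc hBc fun N =>
    sup_inf_sup_le_of_coprime_map (N.coprime_card_map_mk'_index hSpro hSmax) A B hx

/-- Let `ℓ` be a prime and `G` a profinite group with a closed normal
`ℓ`-Sylow subgroup `Sℓ` (a closed normal pro-`ℓ` subgroup containing every closed pro-`ℓ`
subgroup of `G`).  Then for all closed normal subgroups `A` and `B` of `G` we have
`SℓA ∩ SℓB = Sℓ(A ∩ B)` (products of normal subgroups being their joins). -/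
theorem statement_16 (ℓ : ℕ) (hl : ℓ.Prime) (G : Type) [Group G] [TopologicalSpace G]
    [IsTopologicalGroup G] [CompactSpace G] [T2Space G] [TotallyDisconnectedSpace G]
    (Sl : Subgroup G) [Sl.Normal] (hSc : IsClosed (Sl : Set G))
    (hSpro : IsProL ℓ ↥Sl)
    (hSmax : ∀ K : Subgroup G, IsClosed (K : Set G) → IsProL ℓ ↥K → K ≤ Sl)
    (A B : Subgroup G) [A.Normal] [B.Normal]
    (hAc : IsClosed (A : Set G)) (hBc : IsClosed (B : Set G)) :
    (Sl ⊔ A) ⊓ (Sl ⊔ B) = Sl ⊔ (A ⊓ B) :=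
  statement_16_general ℓ hl G Sl hSc hSpro hSmax A B hAc hBc
end
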